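/- arXiv:2203.04897 — 3 statements merged into one kernel-verified Lean document; each statement's English description precedes it below -/
import Mathlib

section
/- Let α ∈ (0,1), B > 0, and let p be a probability density on (0,∞) with p(y) = y^{-1-α} for all y ≥ B. Let h > 0, L > 0, and let f : [0,∞) → ℝ be continuous with f(0) = 0, f(y) → 0 as y → ∞, and |f(y)| ≤ L·y for all y ∈ [0, B·h]. Then |h^{-α} ∫₀^∞ f(h·y) p(y) dy − ∫₀^∞ f(y) y^{-1-α} dy| ≤ C_B · L · h^{1-α}, where C_B = B^{1-α}/(1-α) + ∫₀^B y·p(y) dy. -/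
open MeasureTheory Set Filter

/-!
On `[B, ∞)` the density is exactly `y ^ (-1 - α)`, so after the substitution `z = h y` the tail
`∫_{y > B} f (h y) p y` equals `h ^ α ∫_{z > B h} f z z ^ (-1 - α)`, and the tails of the
two integrals cancel. What remains are the integrals over `(0, B]` and `(0, B h]`, where
`|f y| ≤ L y`: the first is at most `L h ∫₀^B y p y`, the second at most
`L (B h) ^ (1 - α) / (1 - α)`. Continuity and the limit at `∞` make `f` bounded, which provides
the integrability needed to split the integrals.
-/

theorem ContinuousOn.exists_bound_Ici_of_tendsto {f : ℝ → ℝ} {a c : ℝ}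
    (hf : ContinuousOn f (Ici a)) (hlim : Tendsto f atTop (nhds c)) :
    ∃ M, ∀ y ∈ Ici a, |f y| ≤ M := by
  obtain ⟨R, hR⟩ :=
    eventually_atTop.mp (hlim.abs.eventually (eventually_le_nhds (lt_add_one |c|)))
  obtain ⟨M, hM⟩ := isCompact_Icc.exists_bound_of_continuousOn
    (hf.mono (Icc_subset_Ici_self : Icc a (max R a) ⊆ Ici a))
  refine ⟨max M (|c| + 1), fun y hy => ?_⟩
  rcases le_total y (max R a) with hyR | hyR
  · exact (hM y ⟨hy, hyR⟩).trans (le_max_left _ _)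
  · exact (hR y (le_of_max_le_left hyR)).trans (le_max_right _ _)

theorem setIntegral_Ioi_eq_Ioc_add_Ioi {f : ℝ → ℝ} {a b : ℝ} (hab : a ≤ b)
    (hf : IntegrableOn f (Ioi a)) :
    ∫ y in Ioi a, f y = (∫ y in Ioc a b, f y) + ∫ y in Ioi b, f y := by
  rw [← intervalIntegral.integral_interval_add_Ioi hf (hf.mono_set (Ioi_subset_Ioi hab)),
    intervalIntegral.integral_of_le hab]

theorem integral_Ioi_comp_mul_left_mul_rpow (g : ℝ → ℝ) {a b : ℝ} (ha : 0 ≤ a) (hb : 0 < b)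
    (s : ℝ) :
    ∫ y in Ioi a, g (b * y) * y ^ s = b ^ (-1 - s) * ∫ z in Ioi (a * b), g z * z ^ s := by
  have hscale : ∫ y in Ioi a, g (b * y) * (b * y) ^ s
      = b ^ s * ∫ y in Ioi a, g (b * y) * y ^ s := by
    rw [← integral_const_mul]
    refine setIntegral_congr_fun measurableSet_Ioi fun y hy => ?_
    rw [Real.mul_rpow hb.le (ha.trans (le_of_lt hy))]
    ring
  have hcov := integral_comp_mul_left_Ioi (fun z => g z * z ^ s) a hb
  rw [hscale, smul_eq_mul, mul_comm b a] at hcov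
  rw [← mul_right_inj' (Real.rpow_pos_of_pos hb s).ne', hcov, ← mul_assoc, ← Real.rpow_add hb,
    add_sub_cancel, Real.rpow_neg_one]

section NearZero

variable {f : ℝ → ℝ} {b L α : ℝ}

theorem integral_Ioc_zero_rpow_neg (hα : α < 1) (hb : 0 ≤ b) :
    ∫ y in Ioc 0 b, y ^ (-α) = b ^ (1 - α) / (1 - α) := by
  rw [← intervalIntegral.integral_of_le hb, integral_rpow (Or.inl (by linarith)),
    Real.zero_rpow (by linarith), neg_add_eq_sub, sub_zero]

theorem integrableOn_Ioc_zero_rpow_neg (hα : α < 1) (hb : 0 ≤ b) :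
    IntegrableOn (fun y : ℝ => y ^ (-α)) (Ioc 0 b) :=
  (intervalIntegrable_iff_integrableOn_Ioc_of_le hb).mp
    (intervalIntegral.intervalIntegrable_rpow' (by linarith))

theorem norm_mul_rpow_le_of_abs_le (hf : ∀ y ∈ Ioc 0 b, |f y| ≤ L * y) :
    ∀ y ∈ Ioc 0 b, ‖f y * y ^ (-1 - α)‖ ≤ L * y ^ (-α) := by
  intro y hy
  have hpow : y * y ^ (-1 - α) = y ^ (-α) := by
    rw [show -α = 1 + (-1 - α) by ring, Real.rpow_add hy.1, Real.rpow_one]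
  rw [Real.norm_eq_abs, abs_mul, abs_of_nonneg (Real.rpow_nonneg hy.1.le _), ← hpow, ← mul_assoc]
  exact mul_le_mul_of_nonneg_right (hf y hy) (Real.rpow_nonneg hy.1.le _)

theorem integrableOn_Ioc_zero_mul_rpow (hα : α < 1) (hb : 0 ≤ b)
    (hf_cont : ContinuousOn f (Ioc 0 b)) (hf : ∀ y ∈ Ioc 0 b, |f y| ≤ L * y) :
    IntegrableOn (fun y => f y * y ^ (-1 - α)) (Ioc 0 b) := by
  refine ((integrableOn_Ioc_zero_rpow_neg hα hb).const_mul L).mono' ?_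
    ((ae_restrict_iff' measurableSet_Ioc).mpr
      (Eventually.of_forall (norm_mul_rpow_le_of_abs_le hf)))
  exact (hf_cont.mul (continuousOn_id.rpow_const fun y hy => Or.inl hy.1.ne')).aestronglyMeasurable
    measurableSet_Ioc

theorem abs_integral_Ioc_zero_mul_rpow_le (hα : α < 1) (hb : 0 ≤ b)
    (hf : ∀ y ∈ Ioc 0 b, |f y| ≤ L * y) :
    |∫ y in Ioc 0 b, f y * y ^ (-1 - α)| ≤ L * (b ^ (1 - α) / (1 - α)) := by
  rw [← integral_Ioc_zero_rpow_neg hα hb, ← integral_const_mul]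
  exact norm_integral_le_of_norm_le ((integrableOn_Ioc_zero_rpow_neg hα hb).const_mul L)
    ((ae_restrict_iff' measurableSet_Ioc).mpr
      (Eventually.of_forall (norm_mul_rpow_le_of_abs_le hf)))

end NearZero

theorem IntegrableOn.id_mul_Ioc {p : ℝ → ℝ} {a b : ℝ} (hp : IntegrableOn p (Ioc a b)) :
    IntegrableOn (fun y => y * p y) (Ioc a b) :=
  hp.bdd_mul (c := max |a| |b|) continuous_id.aestronglyMeasurable
    ((ae_restrict_iff' measurableSet_Ioc).mpr
      (Eventually.of_forall fun _ hy => abs_le_max_abs_abs hy.1.le hy.2))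

theorem abs_integral_Ioc_comp_mul_le {f p : ℝ → ℝ} {B h L : ℝ} (hh : 0 ≤ h)
    (hp_nonneg : ∀ y ∈ Ioc 0 B, 0 ≤ p y) (hp : IntegrableOn (fun y => y * p y) (Ioc 0 B))
    (hf : ∀ y ∈ Icc 0 (B * h), |f y| ≤ L * y) :
    |∫ y in Ioc 0 B, f (h * y) * p y| ≤ L * h * ∫ y in Ioc 0 B, y * p y := by
  rw [← integral_const_mul, ← Real.norm_eq_abs]
  refine norm_integral_le_of_norm_le (hp.const_mul _)
    ((ae_restrict_iff' measurableSet_Ioc).mpr (Eventually.of_forall fun y hy => ?_))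
  have hhy : h * y ∈ Icc 0 (B * h) :=
    ⟨mul_nonneg hh hy.1.le, by rw [mul_comm B]; exact mul_le_mul_of_nonneg_left hy.2 hh⟩
  rw [Real.norm_eq_abs, abs_mul, abs_of_nonneg (hp_nonneg y hy)]
  calc |f (h * y)| * p y ≤ L * (h * y) * p y :=
        mul_le_mul_of_nonneg_right (hf _ hhy) (hp_nonneg y hy)
    _ = L * h * (y * p y) := by ring

theorem integrableOn_Ioi_comp_mul_left_mul {f p : ℝ → ℝ} {h M : ℝ} (hh : 0 ≤ h)
    (hf_cont : ContinuousOn f (Ici 0)) (hM : ∀ y ∈ Ici 0, |f y| ≤ M)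
    (hp : IntegrableOn p (Ioi 0)) :
    IntegrableOn (fun y => f (h * y) * p y) (Ioi 0) :=
  hp.bdd_mul
    ((hf_cont.comp (continuousOn_const.mul continuousOn_id) fun _ hy =>
      mul_nonneg hh (le_of_lt hy)).aestronglyMeasurable measurableSet_Ioi)
    ((ae_restrict_iff' measurableSet_Ioi).mpr
      (Eventually.of_forall fun _ hy => hM _ (mul_nonneg hh (le_of_lt hy))))

theorem integrableOn_Ioi_zero_mul_rpow {f : ℝ → ℝ} {b L M α : ℝ} (hα : α ∈ Ioo 0 1)
    (hb : 0 < b) (hf_cont : ContinuousOn f (Ici 0)) (hM : ∀ y ∈ Ici 0, |f y| ≤ M)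
    (hf : ∀ y ∈ Ioc 0 b, |f y| ≤ L * y) :
    IntegrableOn (fun y => f y * y ^ (-1 - α)) (Ioi 0) := by
  rw [← Ioc_union_Ioi_eq_Ioi hb.le]
  refine (integrableOn_Ioc_zero_mul_rpow hα.2 hb.le
    (hf_cont.mono fun _ hy => le_of_lt hy.1) hf).union ?_
  refine (integrableOn_Ioi_rpow_of_lt (by linarith [hα.1]) hb).bdd_mul
    ((hf_cont.mono fun _ hy => hb.le.trans (le_of_lt hy)).aestronglyMeasurable measurableSet_Ioi)
    ((ae_restrict_iff' measurableSet_Ioi).mpr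
      (Eventually.of_forall fun y hy => hM y (hb.le.trans (le_of_lt hy))))

theorem stmt_0_general
    (α B h L : ℝ) (hα : α ∈ Set.Ioo (0:ℝ) 1) (hB : 0 < B) (hh : 0 < h)
    (p : ℝ → ℝ)
    (hp_nonneg : ∀ y ∈ Set.Ioi (0:ℝ), 0 ≤ p y)
    (hp_prob : ∫ y in Set.Ioi (0:ℝ), p y = 1)
    (hp_tail : ∀ y : ℝ, B ≤ y → p y = y ^ (-1 - α))
    (f : ℝ → ℝ) (hf_cont : ContinuousOn f (Set.Ici 0))
    (hf_inf : Tendsto f atTop (nhds 0))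
    (hf_lip : ∀ y ∈ Set.Icc (0:ℝ) (B * h), |f y| ≤ L * y) :
    |h ^ (-α) * (∫ y in Set.Ioi (0:ℝ), f (h * y) * p y)
        - ∫ y in Set.Ioi (0:ℝ), f y * y ^ (-1 - α)|
      ≤ (B ^ (1 - α) / (1 - α) + ∫ y in Set.Ioc (0:ℝ) B, y * p y) * L * h ^ (1 - α) := by
  obtain ⟨M, hM⟩ := hf_cont.exists_bound_Ici_of_tendsto hf_inf
  have hBh : 0 < B * h := mul_pos hB hh
  have hf_lip' : ∀ y ∈ Ioc 0 (B * h), |f y| ≤ L * y :=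
    fun y hy => hf_lip y (Ioc_subset_Icc_self hy)
  have hp_int : IntegrableOn p (Ioi 0) := .of_integral_ne_zero (by simp [hp_prob])
  have htail :
      ∫ y in Ioi B, f (h * y) * p y = h ^ α * ∫ z in Ioi (B * h), f z * z ^ (-1 - α) := by
    rw [setIntegral_congr_fun measurableSet_Ioi fun y hy => by rw [hp_tail y (le_of_lt hy)],
      integral_Ioi_comp_mul_left_mul_rpow f hB.le hh, sub_sub_cancel]
  have hA := abs_integral_Ioc_comp_mul_le hh.le (fun y hy => hp_nonneg y hy.1)
    (IntegrableOn.id_mul_Ioc (hp_int.mono_set Ioc_subset_Ioi_self)) hf_lip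
  have hS := abs_integral_Ioc_zero_mul_rpow_le hα.2 hBh.le hf_lip'
  rw [setIntegral_Ioi_eq_Ioc_add_Ioi hB.le
      (integrableOn_Ioi_comp_mul_left_mul hh.le hf_cont hM hp_int),
    setIntegral_Ioi_eq_Ioc_add_Ioi hBh.le
      (integrableOn_Ioi_zero_mul_rpow hα hBh hf_cont hM hf_lip'), htail]
  set A := ∫ y in Ioc 0 B, f (h * y) * p y
  set S := ∫ y in Ioc 0 (B * h), f y * y ^ (-1 - α)
  have hcancel : h ^ (-α) * h ^ α = 1 := by
    rw [← Real.rpow_add hh, neg_add_cancel, Real.rpow_zero]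
  calc |h ^ (-α) * (A + h ^ α * _) - (S + _)| = |h ^ (-α) * A - S| := by
        rw [mul_add, ← mul_assoc, hcancel]; ring_nf
    _ ≤ h ^ (-α) * |A| + |S| :=
        (abs_sub _ _).trans_eq (by rw [abs_mul, abs_of_pos (Real.rpow_pos_of_pos hh _)])
    _ ≤ h ^ (-α) * (L * h * ∫ y in Ioc 0 B, y * p y) + L * ((B * h) ^ (1 - α) / (1 - α)) := by
        gcongr
    _ = _ := by
        rw [Real.mul_rpow hB.le hh.le, sub_eq_neg_add, Real.rpow_add hh, Real.rpow_one]; ring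

/-- Proposition 5.1 (rate of convergence for the standard CTRW), Lipschitz case:
if `p` is a probability density on `(0,∞)` with `p(y) = y^{-1-α}` for `y ≥ B`,
and `f` is continuous on `[0,∞)` with `f(0)=0`, `f(∞)=0` and `|f(y)| ≤ L y` on `[0,Bh]`,
then `|h^{-α} ∫₀^∞ f(hy) p(y) dy − ∫₀^∞ f(y) y^{-1-α} dy| ≤ C_B L h^{1-α}` with
`C_B = B^{1-α}/(1-α) + ∫₀^B y p(y) dy`. -/
theorem stmt_0
    (α B h L : ℝ) (hα : α ∈ Set.Ioo (0:ℝ) 1) (hB : 0 < B) (hh : 0 < h) (hL : 0 < L)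
    (p : ℝ → ℝ) (hp_meas : Measurable p)
    (hp_nonneg : ∀ y ∈ Set.Ioi (0:ℝ), 0 ≤ p y)
    (hp_prob : ∫ y in Set.Ioi (0:ℝ), p y = 1)
    (hp_tail : ∀ y : ℝ, B ≤ y → p y = y ^ (-1 - α))
    (f : ℝ → ℝ) (hf_cont : ContinuousOn f (Set.Ici 0))
    (hf0 : f 0 = 0)
    (hf_inf : Tendsto f atTop (nhds 0))
    (hf_lip : ∀ y ∈ Set.Icc (0:ℝ) (B * h), |f y| ≤ L * y) :
    |h ^ (-α) * (∫ y in Set.Ioi (0:ℝ), f (h * y) * p y)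
        - ∫ y in Set.Ioi (0:ℝ), f y * y ^ (-1 - α)|
      ≤ (B ^ (1 - α) / (1 - α) + ∫ y in Set.Ioc (0:ℝ) B, y * p y) * L * h ^ (1 - α) :=
  stmt_0_general α B h L hα hB hh p hp_nonneg hp_prob hp_tail f hf_cont hf_inf hf_lip
end

section
/- Let α ∈ (0,1), 0 < a₁ ≤ a₂ with α·a₂ < 1, B > 0, and let a : ℝ × ℝ^d → [a₁, a₂] be measurable. For each (s,x) let Q_{s,x} be a probability density on (0,∞), jointly measurable in (s,x,r), satisfying Q_{s,x}(r) = r^{-1-α·a(s,x)} for all r ≥ B and Q_{s,x}(r) ≤ 1 for all r > 0. Let F : ℝ^d × ℝ → ℝ be bounded and measurable with |F(x, s+r) − F(x,s)| ≤ L·r for all x ∈ ℝ^d, s ∈ ℝ, r ≥ 0. Then for every τ ∈ (0,1]: sup over (s,x) of |τ^{-1} ∫₀^∞ (F(x, s + τ^{1/(α·a(s,x))}·r) − F(x,s)) Q_{s,x}(r) dr − ∫₀^∞ (F(x, s+r) − F(x,s)) r^{-1-α·a(s,x)} dr| ≤ (max(1,B)/(1 − α·a₂) + B²/2) · L · τ^{1/(α·a₂)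 − 1}. -/
open MeasureTheory Set Filter

/-- Temporal part of the generator convergence for the scaled CTRW approximation:
for waiting-time densities `Q_{s,x}` with variable-order power tails
`Q_{s,x}(r) = r^(-1-α a(s,x))` for `r ≥ B` and `Q_{s,x} ≤ 1`, and a bounded measurable `F`
that is Lipschitz in time with constant `L`, the scaled jump operator converges to the
variable-order fractional integral operator uniformly in `(s,x)`, with the explicit rate
`(max(1,B)/(1 − α a₂) + B²/2) L τ^{1/(α a₂) − 1}`. -/
theorem stmt_5
    {d : ℕ}
    (α a₁ a₂ B L : ℝ) (hα : α ∈ Set.Ioo (0:ℝ) 1)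
    (ha₁ : 0 < a₁) (ha₁₂ : a₁ ≤ a₂) (ha₂ : α * a₂ < 1) (hB : 0 < B)
    (a : ℝ → (Fin d → ℝ) → ℝ)
    (ha_meas : Measurable fun q : ℝ × (Fin d → ℝ) => a q.1 q.2)
    (ha_range : ∀ s x, a s x ∈ Set.Icc a₁ a₂)
    (Q : ℝ → (Fin d → ℝ) → ℝ → ℝ)
    (hQ_meas : Measurable fun q : ℝ × (Fin d → ℝ) × ℝ => Q q.1 q.2.1 q.2.2)
    (hQ_nonneg : ∀ s x, ∀ r ∈ Set.Ioi (0:ℝ), 0 ≤ Q s x r)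
    (hQ_prob : ∀ s x, ∫ r in Set.Ioi (0:ℝ), Q s x r = 1)
    (hQ_tail : ∀ s x, ∀ r : ℝ, B ≤ r → Q s x r = r ^ (-1 - α * a s x))
    (hQ_le_one : ∀ s x, ∀ r ∈ Set.Ioi (0:ℝ), Q s x r ≤ 1)
    (F : (Fin d → ℝ) → ℝ → ℝ)
    (hF_meas : Measurable fun q : (Fin d → ℝ) × ℝ => F q.1 q.2)
    (hF_bdd : ∃ M, ∀ x s, |F x s| ≤ M)
    (hF_lip : ∀ x : Fin d → ℝ, ∀ s : ℝ, ∀ r : ℝ, 0 ≤ r → |F x (s + r) - F x s| ≤ L * r) :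
    ∀ τ ∈ Set.Ioc (0:ℝ) 1, ∀ (s : ℝ) (x : Fin d → ℝ),
      |τ⁻¹ * (∫ r in Set.Ioi (0:ℝ),
            (F x (s + τ ^ (1 / (α * a s x)) * r) - F x s) * Q s x r)
          - ∫ r in Set.Ioi (0:ℝ), (F x (s + r) - F x s) * r ^ (-1 - α * a s x)|
        ≤ (max 1 B / (1 - α * a₂) + B ^ 2 / 2) * L * τ ^ (1 / (α * a₂) - 1) := by
  obtain ⟨hα0, hα1⟩ := hα
  obtain ⟨M0, hM0⟩ := hF_bdd
  intro τ hτ s x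
  obtain ⟨hτ0, hτ1⟩ := hτ
  have hL : 0 ≤ L := le_trans (abs_nonneg _) (by simpa using hF_lip x s 1 zero_le_one)
  set M : ℝ := max M0 0 with hMdef
  have hM0' : 0 ≤ M := le_max_right _ _
  have haβ := ha_range s x
  set β := α * a s x with hβdef
  have hβ0 : 0 < β := mul_pos hα0 (lt_of_lt_of_le ha₁ haβ.1)
  have hβ2 : β ≤ α * a₂ := mul_le_mul_of_nonneg_left haβ.2 hα0.le
  have hβ1 : β < 1 := lt_of_le_of_lt hβ2 ha₂
  have h1β : (0:ℝ) < 1 - β := by linarith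
  have h1a2 : (0:ℝ) < 1 - α * a₂ := by linarith
  set h := τ ^ (1 / β) with hhdef
  have hh0 : 0 < h := Real.rpow_pos_of_pos hτ0 _
  have hhτ : h ^ β = τ := by
    rw [hhdef, ← Real.rpow_mul hτ0.le, one_div_mul_cancel hβ0.ne', Real.rpow_one]
  have hhB0 : 0 < h * B := mul_pos hh0 hB
  -- pointwise bounds on the increment of F
  have hg2M : ∀ u : ℝ, |F x (s + u) - F x s| ≤ 2 * M := by
    intro u
    have h1 : |F x (s + u)| ≤ M := (hM0 x _).trans (le_max_left _ _)
    have h2 : |F x s| ≤ M := (hM0 x _).trans (le_max_left _ _)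
    calc |F x (s + u) - F x s| ≤ |F x (s + u)| + |F x s| := abs_sub _ _
      _ ≤ 2 * M := by linarith
  -- measurability
  have hmeas_g : Measurable fun u : ℝ => F x (s + u) - F x s :=
    (hF_meas.comp (measurable_const.prodMk (measurable_id.const_add s))).sub measurable_const
  have hmeas_gh : Measurable fun r : ℝ => F x (s + h * r) - F x s :=
    hmeas_g.comp (measurable_id.const_mul h)
  have hmeas_rpow : Measurable fun u : ℝ => u ^ (-1 - β) := by fun_prop
  have hQm : Measurable (Q s x) :=
    hQ_meas.comp (measurable_const.prodMk (measurable_const.prodMk measurable_id))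
  have hmeas_f : Measurable fun u : ℝ => (F x (s + u) - F x s) * u ^ (-1 - β) :=
    hmeas_g.mul hmeas_rpow
  have hmeas_φ : Measurable fun r : ℝ => (F x (s + h * r) - F x s) * Q s x r :=
    hmeas_gh.mul hQm
  have hmeas_fh : Measurable fun r : ℝ => (F x (s + h * r) - F x s) * r ^ (-1 - β) :=
    hmeas_gh.mul hmeas_rpow
  -- integrability of the scaled integrand near 0
  have int_φ_Ioc : IntegrableOn (fun r => (F x (s + h * r) - F x s) * Q s x r) (Ioc 0 B) := by
    refine Integrable.mono' (g := fun r => L * h * r) ?_ hmeas_φ.aestronglyMeasurable ?_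
    · exact (continuous_const.mul continuous_id).integrableOn_Ioc
    · filter_upwards [ae_restrict_mem measurableSet_Ioc] with r hr
      have hr0 : 0 < r := hr.1
      have hQ1 : |Q s x r| ≤ 1 :=
        abs_le.mpr ⟨by linarith [hQ_nonneg s x r hr0], hQ_le_one s x r hr0⟩
      have hFb : |F x (s + h * r) - F x s| ≤ L * (h * r) :=
        hF_lip x s (h * r) (by positivity)
      rw [Real.norm_eq_abs, abs_mul]
      calc |F x (s + h * r) - F x s| * |Q s x r| ≤ (L * (h * r)) * 1 :=
            mul_le_mul hFb hQ1 (abs_nonneg _) (by positivity)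
        _ = L * h * r := by ring
  -- integrability of the power-tail integrands
  have int_pow_tail : ∀ c : ℝ, 0 < c →
      IntegrableOn (fun u : ℝ => (F x (s + u) - F x s) * u ^ (-1 - β)) (Ioi c) := by
    intro c hc
    have hpow : IntegrableOn (fun u : ℝ => u ^ (-1 - β)) (Ioi c) :=
      integrableOn_Ioi_rpow_of_lt (by linarith) hc
    refine Integrable.mono' (hpow.const_mul (2 * M)) hmeas_f.aestronglyMeasurable ?_
    filter_upwards [ae_restrict_mem measurableSet_Ioi] with u hu
    have hu0 : 0 < u := hc.trans hu
    rw [Real.norm_eq_abs, abs_mul, abs_of_nonneg (Real.rpow_nonneg hu0.le _)]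
    exact mul_le_mul_of_nonneg_right (hg2M u) (Real.rpow_nonneg hu0.le _)
  have int_φpow_Ioi : IntegrableOn
      (fun r => (F x (s + h * r) - F x s) * r ^ (-1 - β)) (Ioi B) := by
    have hpow : IntegrableOn (fun u : ℝ => u ^ (-1 - β)) (Ioi B) :=
      integrableOn_Ioi_rpow_of_lt (by linarith) hB
    refine Integrable.mono' (hpow.const_mul (2 * M)) hmeas_fh.aestronglyMeasurable ?_
    filter_upwards [ae_restrict_mem measurableSet_Ioi] with r hr
    have hr0 : 0 < r := hB.trans hr
    rw [Real.norm_eq_abs, abs_mul, abs_of_nonneg (Real.rpow_nonneg hr0.le _)]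
    exact mul_le_mul_of_nonneg_right (hg2M (h * r)) (Real.rpow_nonneg hr0.le _)
  have int_φ_Ioi : IntegrableOn (fun r => (F x (s + h * r) - F x s) * Q s x r) (Ioi B) :=
    int_φpow_Ioi.congr_fun (fun r hr => by rw [hQ_tail s x r (le_of_lt hr)]) measurableSet_Ioi
  have int_f_Ioc : IntegrableOn
      (fun u : ℝ => (F x (s + u) - F x s) * u ^ (-1 - β)) (Ioc 0 (h * B)) := by
    have hmaj : IntegrableOn (fun u : ℝ => L * u ^ (-β)) (Ioc 0 (h * B)) :=
      ((intervalIntegral.intervalIntegrable_rpow' (by linarith) :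
        IntervalIntegrable (fun u : ℝ => u ^ (-β)) volume 0 (h * B)).1.const_mul L)
    refine Integrable.mono' hmaj hmeas_f.aestronglyMeasurable ?_
    filter_upwards [ae_restrict_mem measurableSet_Ioc] with u hu
    have hu0 : 0 < u := hu.1
    rw [Real.norm_eq_abs, abs_mul, abs_of_nonneg (Real.rpow_nonneg hu0.le _)]
    calc |F x (s + u) - F x s| * u ^ (-1 - β)
        ≤ (L * u) * u ^ (-1 - β) :=
          mul_le_mul_of_nonneg_right (hF_lip x s u hu0.le) (Real.rpow_nonneg hu0.le _)
      _ = L * (u ^ (1:ℝ) * u ^ (-1 - β)) := by rw [Real.rpow_one]; ring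
      _ = L * u ^ (-β) := by rw [← Real.rpow_add hu0]; congr 1; ring
  have int_f_Ioi : IntegrableOn
      (fun u : ℝ => (F x (s + u) - F x s) * u ^ (-1 - β)) (Ioi (h * B)) :=
    int_pow_tail (h * B) hhB0
  -- splitting the first integral
  have split1 : (∫ r in Ioi (0:ℝ), (F x (s + h * r) - F x s) * Q s x r)
      = (∫ r in Ioc (0:ℝ) B, (F x (s + h * r) - F x s) * Q s x r)
        + ∫ r in Ioi B, (F x (s + h * r) - F x s) * Q s x r := by
    rw [← Ioc_union_Ioi_eq_Ioi hB.le,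
      setIntegral_union Ioc_disjoint_Ioi_same measurableSet_Ioi int_φ_Ioc int_φ_Ioi]
  have tail_eq : (∫ r in Ioi B, (F x (s + h * r) - F x s) * Q s x r)
      = ∫ r in Ioi B, (F x (s + h * r) - F x s) * r ^ (-1 - β) :=
    setIntegral_congr_fun measurableSet_Ioi (fun r hr => by rw [hQ_tail s x r (le_of_lt hr)])
  -- change of variables on the tail
  have hhh : h ^ (1 + β) * h ^ (-1 - β) = 1 := by
    rw [← Real.rpow_add hh0]; norm_num
  have cov : (∫ r in Ioi B, (F x (s + h * r) - F x s) * r ^ (-1 - β))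
      = h ^ β * ∫ u in Ioi (h * B), (F x (s + u) - F x s) * u ^ (-1 - β) := by
    have key := integral_comp_mul_left_Ioi
      (fun u : ℝ => (F x (s + u) - F x s) * u ^ (-1 - β)) B hh0
    simp only [smul_eq_mul] at key
    have e1 : EqOn (fun r : ℝ => (F x (s + h * r) - F x s) * r ^ (-1 - β))
        (fun r : ℝ => h ^ (1 + β) * ((F x (s + h * r) - F x s) * (h * r) ^ (-1 - β)))
        (Ioi B) := by
      intro r hr
      have hr0 : (0:ℝ) < r := hB.trans hr
      simp only
      calc (F x (s + h * r) - F x s) * r ^ (-1 - β)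
          = (h ^ (1 + β) * h ^ (-1 - β)) * ((F x (s + h * r) - F x s) * r ^ (-1 - β)) := by
            rw [hhh, one_mul]
        _ = h ^ (1 + β) * ((F x (s + h * r) - F x s) * (h * r) ^ (-1 - β)) := by
            rw [Real.mul_rpow hh0.le hr0.le]; ring
    rw [setIntegral_congr_fun measurableSet_Ioi e1, integral_const_mul, key, ← mul_assoc]
    congr 1
    rw [← Real.rpow_neg_one h, ← Real.rpow_add hh0]
    congr 1; ring
  -- splitting the second integral
  have split2 : (∫ u in Ioi (0:ℝ), (F x (s + u) - F x s) * u ^ (-1 - β))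
      = (∫ u in Ioc (0:ℝ) (h * B), (F x (s + u) - F x s) * u ^ (-1 - β))
        + ∫ u in Ioi (h * B), (F x (s + u) - F x s) * u ^ (-1 - β) := by
    rw [← Ioc_union_Ioi_eq_Ioi hhB0.le,
      setIntegral_union Ioc_disjoint_Ioi_same measurableSet_Ioi int_f_Ioc int_f_Ioi]
  -- the main algebraic identity
  have main_eq : τ⁻¹ * (∫ r in Ioi (0:ℝ), (F x (s + h * r) - F x s) * Q s x r)
      - (∫ u in Ioi (0:ℝ), (F x (s + u) - F x s) * u ^ (-1 - β))
      = τ⁻¹ * (∫ r in Ioc (0:ℝ) B, (F x (s + h * r) - F x s) * Q s x r)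
        - ∫ u in Ioc (0:ℝ) (h * B), (F x (s + u) - F x s) * u ^ (-1 - β) := by
    rw [split1, tail_eq, cov, split2, hhτ, mul_add, inv_mul_cancel_left₀ hτ0.ne']
    ring
  -- bound on the first small piece
  have bnd1 : |∫ r in Ioc (0:ℝ) B, (F x (s + h * r) - F x s) * Q s x r|
      ≤ L * h * (B ^ 2 / 2) := by
    have hint : Integrable (fun r : ℝ => L * h * r) (volume.restrict (Ioc (0:ℝ) B)) :=
      (continuous_const.mul continuous_id).integrableOn_Ioc
    have hmaj : ∀ᵐ r ∂(volume.restrict (Ioc (0:ℝ) B)),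
        ‖(F x (s + h * r) - F x s) * Q s x r‖ ≤ L * h * r := by
      filter_upwards [ae_restrict_mem measurableSet_Ioc] with r hr
      have hr0 : 0 < r := hr.1
      have hQ1 : |Q s x r| ≤ 1 :=
        abs_le.mpr ⟨by linarith [hQ_nonneg s x r hr0], hQ_le_one s x r hr0⟩
      have hFb : |F x (s + h * r) - F x s| ≤ L * (h * r) :=
        hF_lip x s (h * r) (by positivity)
      rw [Real.norm_eq_abs, abs_mul]
      calc |F x (s + h * r) - F x s| * |Q s x r| ≤ (L * (h * r)) * 1 :=
            mul_le_mul hFb hQ1 (abs_nonneg _) (by positivity)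
        _ = L * h * r := by ring
    have hb := norm_integral_le_of_norm_le hint hmaj
    rw [Real.norm_eq_abs] at hb
    calc |∫ r in Ioc (0:ℝ) B, (F x (s + h * r) - F x s) * Q s x r|
        ≤ ∫ r in Ioc (0:ℝ) B, L * h * r := hb
      _ = L * h * (B ^ 2 / 2) := by
          rw [← intervalIntegral.integral_of_le hB.le,
            intervalIntegral.integral_const_mul, integral_id]
          norm_num
  -- bound on the second small piece
  have bnd2 : |∫ u in Ioc (0:ℝ) (h * B), (F x (s + u) - F x s) * u ^ (-1 - β)|
      ≤ L * ((h * B) ^ (1 - β) / (1 - β)) := by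
    have hint : Integrable (fun u : ℝ => L * u ^ (-β))
        (volume.restrict (Ioc (0:ℝ) (h * B))) :=
      ((intervalIntegral.intervalIntegrable_rpow' (by linarith) :
        IntervalIntegrable (fun u : ℝ => u ^ (-β)) volume 0 (h * B)).1.const_mul L)
    have hmaj : ∀ᵐ u ∂(volume.restrict (Ioc (0:ℝ) (h * B))),
        ‖(F x (s + u) - F x s) * u ^ (-1 - β)‖ ≤ L * u ^ (-β) := by
      filter_upwards [ae_restrict_mem measurableSet_Ioc] with u hu
      have hu0 : 0 < u := hu.1
      rw [Real.norm_eq_abs, abs_mul, abs_of_nonneg (Real.rpow_nonneg hu0.le _)]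
      calc |F x (s + u) - F x s| * u ^ (-1 - β)
          ≤ (L * u) * u ^ (-1 - β) :=
            mul_le_mul_of_nonneg_right (hF_lip x s u hu0.le) (Real.rpow_nonneg hu0.le _)
        _ = L * (u ^ (1:ℝ) * u ^ (-1 - β)) := by rw [Real.rpow_one]; ring
        _ = L * u ^ (-β) := by rw [← Real.rpow_add hu0]; congr 1; ring
    have hb := norm_integral_le_of_norm_le hint hmaj
    rw [Real.norm_eq_abs] at hb
    calc |∫ u in Ioc (0:ℝ) (h * B), (F x (s + u) - F x s) * u ^ (-1 - β)|
        ≤ ∫ u in Ioc (0:ℝ) (h * B), L * u ^ (-β) := hb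
      _ = L * ((h * B) ^ (1 - β) / (1 - β)) := by
          rw [← intervalIntegral.integral_of_le hhB0.le,
            intervalIntegral.integral_const_mul,
            integral_rpow (Or.inl (by linarith : (-1:ℝ) < -β)),
            Real.zero_rpow (by linarith : (-β) + 1 ≠ 0),
            show (-β) + 1 = 1 - β by ring]
          ring
  -- comparison of the scaling factors
  have hτinv : τ⁻¹ * h = h ^ (1 - β) := by
    rw [← hhτ, ← Real.rpow_neg hh0.le]
    nth_rewrite 2 [← Real.rpow_one h]
    rw [← Real.rpow_add hh0]
    congr 1; ring
  have hpow : h ^ (1 - β) ≤ τ ^ (1 / (α * a₂) - 1) := by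
    rw [hhdef, ← Real.rpow_mul hτ0.le]
    apply Real.rpow_le_rpow_of_exponent_ge hτ0 hτ1
    have heq : 1 / β * (1 - β) = 1 / β - 1 := by field_simp
    rw [heq]
    have hle := one_div_le_one_div_of_le hβ0 hβ2
    linarith
  have hBpow : B ^ (1 - β) ≤ max 1 B := by
    rcases le_total B 1 with hB1 | hB1
    · exact le_trans (Real.rpow_le_one hB.le hB1 h1β.le) (le_max_left _ _)
    · refine le_trans (Real.rpow_le_rpow_of_exponent_le hB1 (by linarith : 1 - β ≤ 1)) ?_
      rw [Real.rpow_one]; exact le_max_right _ _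
  have hBmax : B ^ (1 - β) / (1 - β) ≤ max 1 B / (1 - α * a₂) :=
    div_le_div₀ (le_trans zero_le_one (le_max_left _ _)) hBpow h1a2 (by linarith)
  have hτpow0 : 0 ≤ τ ^ (1 / (α * a₂) - 1) := (Real.rpow_pos_of_pos hτ0 _).le
  -- final assembly
  calc |τ⁻¹ * (∫ r in Ioi (0:ℝ), (F x (s + h * r) - F x s) * Q s x r)
        - ∫ u in Ioi (0:ℝ), (F x (s + u) - F x s) * u ^ (-1 - β)|
      = |τ⁻¹ * (∫ r in Ioc (0:ℝ) B, (F x (s + h * r) - F x s) * Q s x r)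
          - ∫ u in Ioc (0:ℝ) (h * B), (F x (s + u) - F x s) * u ^ (-1 - β)| := by
        rw [main_eq]
    _ ≤ τ⁻¹ * |∫ r in Ioc (0:ℝ) B, (F x (s + h * r) - F x s) * Q s x r|
        + |∫ u in Ioc (0:ℝ) (h * B), (F x (s + u) - F x s) * u ^ (-1 - β)| := by
        refine le_trans (abs_sub _ _) ?_
        rw [abs_mul, abs_of_nonneg (inv_nonneg.mpr hτ0.le)]
    _ ≤ τ⁻¹ * (L * h * (B ^ 2 / 2)) + L * ((h * B) ^ (1 - β) / (1 - β)) :=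
        add_le_add (mul_le_mul_of_nonneg_left bnd1 (inv_nonneg.mpr hτ0.le)) bnd2
    _ = (B ^ 2 / 2) * L * h ^ (1 - β) + (B ^ (1 - β) / (1 - β)) * L * h ^ (1 - β) := by
        rw [Real.mul_rpow hh0.le hB.le,
          show τ⁻¹ * (L * h * (B ^ 2 / 2)) = (B ^ 2 / 2) * L * (τ⁻¹ * h) by ring, hτinv]
        ring
    _ ≤ (B ^ 2 / 2) * L * τ ^ (1 / (α * a₂) - 1)
        + (max 1 B / (1 - α * a₂)) * L * τ ^ (1 / (α * a₂) - 1) := by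
        refine add_le_add (mul_le_mul_of_nonneg_left hpow (by positivity)) ?_
        refine mul_le_mul (mul_le_mul_of_nonneg_right hBmax hL) hpow
          (Real.rpow_nonneg hh0.le _) ?_
        have : (0:ℝ) ≤ max 1 B / (1 - α * a₂) :=
          div_nonneg (le_trans zero_le_one (le_max_left _ _)) h1a2.le
        positivity
    _ = (max 1 B / (1 - α * a₂) + B ^ 2 / 2) * L * τ ^ (1 / (α * a₂) - 1) := by ring
end

section
/- Let (Ω, 𝔉, P) be a probability space, let Y : (0,∞) × Ω → ℝ^d be jointly measurable such that for P-almost every ω the path s ↦ Y_s(ω) is right-continuous, and let Σ : Ω → (0,∞) be measurable. Assume that for each s > 0 the law of ω ↦ (Y_s(ω), Σ(ω)) on ℝ^d × ℝ has a density g_s(y,σ) with respect to Lebesgue measure, jointly measurable in (s,y,σ), such that (i) for every 0 < c < C, sup{g_s(y,σ) : s ∈ [c,C], y ∈ ℝ^d, σ ∈ ℝ} < ∞, and (ii) for every (y,σ), the map s ↦ g_s(y,σ) is right-continuous on (0,∞). Then for every K > 1 and every bounded continuous F : ℝ^d → ℝ: E[F(Y_Σ)·𝟙(Σ ∈ [1/K,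 K])] = ∫_{ℝ^d} ∫_{1/K}^{K} g_σ(y,σ) F(y) dσ dy. -/
open MeasureTheory Set Filter Topology

open scoped ENNReal

/-!
Approximate `Σ` from the right by the dyadic times `τₙ(Σ)`, `τₙ(σ) = ⌈2ⁿσ⌉ / 2ⁿ`. As `τₙ` takes
countably many values and `(Y_{τₙ(Σ)}, Σ)` agrees with `(Y_t, Σ)` on `{τₙ(Σ) = t}`, the pair
`(Y_{τₙ(Σ)}, Σ)` has the density `g_{τₙ(σ)}(y, σ)`. Letting `n → ∞`, right-continuity of the paths
of `Y` and of `s ↦ g_s` passes to the limit on both sides by dominated convergence; on the density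
side the domination comes from the uniform bound on `g` and therefore needs `F` compactly supported.
Fatou's lemma makes the diagonal density `g_σ(y, σ)` integrable on `ℝᵈ × [1/K, K]`, and a cutoff
argument then removes the support restriction.
-/

section ChangeOfVariables

variable {Ω α : Type*} [MeasurableSpace Ω] [MeasurableSpace α] {P : Measure Ω} {ν : Measure α}

theorem setIntegral_comp_eq_setIntegral_mul_of_map_eq_withDensity {φ : Ω → α} (hφ : Measurable φ)
    {ρ : α → ℝ} (hρ : Measurable ρ) (hρ_nonneg : ∀ a, 0 ≤ ρ a)
    (hmap : P.map φ = ν.withDensity fun a => ENNReal.ofReal (ρ a))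
    {h : α → ℝ} (hh : Measurable h) {B : Set α} (hB : MeasurableSet B) :
    ∫ ω in φ ⁻¹' B, h (φ ω) ∂P = ∫ a in B, ρ a * h a ∂ν := by
  rw [← setIntegral_map hB hh.aestronglyMeasurable hφ.aemeasurable, hmap,
    setIntegral_withDensity_eq_setIntegral_toReal_smul (f := fun a => ENNReal.ofReal (ρ a))
      hρ.ennreal_ofReal (ae_of_all _ fun _ => ENNReal.ofReal_lt_top) _ hB]
  simp only [ENNReal.toReal_ofReal (hρ_nonneg _), smul_eq_mul]

theorem map_eq_withDensity_of_countable_range {E β : Type*} [MeasurableSpace E]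
    [MeasurableSpace β] {ν : Measure (E × β)} {Y : ℝ → Ω → E}
    (hY : Measurable fun q : ℝ × Ω => Y q.1 q.2) {S : Ω → β} (hS : Measurable S)
    {τ : β → ℝ} (hτ : Measurable τ) (hτ_range : (range τ).Countable) {ρ : ℝ → E × β → ℝ≥0∞}
    (hρ : ∀ b, P.map (fun ω => (Y (τ b) ω, S ω)) = ν.withDensity (ρ (τ b))) :
    P.map (fun ω => (Y (τ (S ω)) ω, S ω)) = ν.withDensity fun q => ρ (τ q.2) q := by
  refine Measure.ext_of_sUnion_eq_univ (hτ_range.image fun t => {q : E × β | τ q.2 = t})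
    (eq_univ_of_forall fun q => mem_sUnion.2 ⟨_, mem_image_of_mem _ (mem_range_self q.2), rfl⟩) ?_
  rintro _ ⟨_, ⟨b, rfl⟩, rfl⟩
  have hB : MeasurableSet {q : E × β | τ q.2 = τ b} :=
    (hτ.comp measurable_snd) (measurableSet_singleton _)
  have hYb : Measurable fun ω => (Y (τ b) ω, S ω) :=
    (hY.comp (measurable_const.prodMk measurable_id)).prodMk hS
  have hYS : Measurable fun ω => (Y (τ (S ω)) ω, S ω) :=
    (hY.comp ((hτ.comp hS).prodMk measurable_id)).prodMk hS
  have hpre : (fun ω => (Y (τ (S ω)) ω, S ω)) ⁻¹' {q | τ q.2 = τ b}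
      = (fun ω => (Y (τ b) ω, S ω)) ⁻¹' {q | τ q.2 = τ b} := rfl
  have hagree : (fun ω => (Y (τ (S ω)) ω, S ω))
      =ᵐ[P.restrict ((fun ω => (Y (τ b) ω, S ω)) ⁻¹' {q | τ q.2 = τ b})]
        fun ω => (Y (τ b) ω, S ω) :=
    ae_restrict_of_forall_mem (hYb hB) fun ω (hω : τ (S ω) = τ b) => by simp only [hω]
  rw [Measure.restrict_map hYS hB, hpre, Measure.map_congr hagree, ← Measure.restrict_map hYb hB,
    hρ, restrict_withDensity hB, restrict_withDensity hB]
  exact withDensity_congr_ae (ae_restrict_of_forall_mem hB fun q (hq : τ q.2 = τ b) => by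
    simp only [hq])

end ChangeOfVariables

noncomputable def dyadicCeil (n : ℕ) (s : ℝ) : ℝ := ⌈s * 2 ^ n⌉ / 2 ^ n

theorem le_dyadicCeil (n : ℕ) (s : ℝ) : s ≤ dyadicCeil n s :=
  (le_div_iff₀ (by positivity)).2 (Int.le_ceil _)

theorem dyadicCeil_lt (n : ℕ) (s : ℝ) : dyadicCeil n s < s + (2 ^ n)⁻¹ := by
  rw [dyadicCeil, div_lt_iff₀ (by positivity), add_mul, inv_mul_cancel₀ (by positivity)]
  exact Int.ceil_lt_add_one _

theorem dyadicCeil_lt_add_one (n : ℕ) (s : ℝ) : dyadicCeil n s < s + 1 :=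
  (dyadicCeil_lt n s).trans_le <| by
    gcongr; exact inv_le_one_of_one_le₀ (one_le_pow₀ one_le_two)

theorem measurable_dyadicCeil (n : ℕ) : Measurable (dyadicCeil n) :=
  (measurable_from_top.comp (measurable_id.mul_const _).ceil).div_const _

theorem countable_range_dyadicCeil (n : ℕ) : (range (dyadicCeil n)).Countable :=
  (countable_range fun k : ℤ => (k : ℝ) / 2 ^ n).mono <|
    range_subset_iff.2 fun s => mem_range.2 ⟨⌈s * 2 ^ n⌉, rfl⟩

theorem tendsto_dyadicCeil (s : ℝ) : Tendsto (fun n => dyadicCeil n s) atTop (𝓝[≥] s) := by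
  refine tendsto_nhdsWithin_of_tendsto_nhds_of_eventually_within _ ?_
    (Eventually.of_forall fun n => le_dyadicCeil n s)
  have hinv : Tendsto (fun n : ℕ => s + (2 ^ n : ℝ)⁻¹) atTop (𝓝 s) := by
    simpa using (tendsto_const_nhds (x := s)).add (tendsto_inv_atTop_zero.comp
      (tendsto_pow_atTop_atTop_of_one_lt (one_lt_two (α := ℝ))))
  exact tendsto_of_tendsto_of_tendsto_of_le_of_le tendsto_const_nhds hinv
    (fun n => le_dyadicCeil n s) fun n => (dyadicCeil_lt n s).le

theorem tendsto_dyadicCeil_max {a σ : ℝ} (h : a ≤ σ) :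
    Tendsto (fun n => dyadicCeil n (max a σ)) atTop (𝓝[≥] σ) := by
  simpa only [max_eq_right h] using tendsto_dyadicCeil σ

theorem dyadicCeil_max_mem_Icc (n : ℕ) {a b σ : ℝ} (hσ : σ ∈ Icc a b) :
    dyadicCeil n (max a σ) ∈ Icc a (b + 1) := by
  rw [max_eq_right hσ.1]
  exact ⟨hσ.1.trans (le_dyadicCeil n σ), by linarith [dyadicCeil_lt_add_one n σ, hσ.2]⟩

section CompactSupportExtension

variable {E : Type*} [NormedAddCommGroup E]

noncomputable def ballCutoff (m : ℕ) (y : E) : ℝ := max 0 (min 1 (m - ‖y‖))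

theorem continuous_ballCutoff (m : ℕ) : Continuous (ballCutoff (E := E) m) :=
  continuous_const.max (continuous_const.min (continuous_const.sub continuous_norm))

theorem norm_ballCutoff_le_one (m : ℕ) (y : E) : ‖ballCutoff m y‖ ≤ 1 := by
  rw [ballCutoff, Real.norm_of_nonneg (le_max_left _ _)]
  exact max_le zero_le_one (min_le_left _ _)

theorem hasCompactSupport_ballCutoff [ProperSpace E] (m : ℕ) :
    HasCompactSupport (ballCutoff (E := E) m) :=
  HasCompactSupport.intro (isCompact_closedBall 0 m) fun y hy =>
    max_eq_left <| (min_le_right _ _).trans <| by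
      rw [Metric.mem_closedBall, dist_zero_right, not_le] at hy
      linarith

theorem tendsto_ballCutoff (y : E) : Tendsto (fun m => ballCutoff m y) atTop (𝓝 1) := by
  refine tendsto_const_nhds.congr' ((eventually_ge_atTop ⌈‖y‖ + 1⌉₊).mono fun m hm => ?_)
  have hy : ‖y‖ + 1 ≤ m := (Nat.le_ceil _).trans (Nat.cast_le.2 hm)
  simp only [ballCutoff]
  rw [min_eq_left (by linarith), max_eq_right zero_le_one]

variable {Ω α : Type*} [MeasurableSpace Ω] [MeasurableSpace α] [ProperSpace E] [MeasurableSpace E]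
  [OpensMeasurableSpace E]

theorem integral_comp_eq_integral_mul_of_forall_hasCompactSupport {P : Measure Ω}
    [IsFiniteMeasure P] {Φ : Ω → E} (hΦ : Measurable Φ) {ν : Measure α} {π : α → E}
    (hπ : Measurable π) {ρ : α → ℝ} (hρ : Integrable ρ ν)
    (h : ∀ f : E → ℝ, Continuous f → HasCompactSupport f →
      ∫ ω, f (Φ ω) ∂P = ∫ a, ρ a * f (π a) ∂ν)
    {F : E → ℝ} (hF : Continuous F) {c : ℝ} (hFc : ∀ y, ‖F y‖ ≤ c) :
    ∫ ω, F (Φ ω) ∂P = ∫ a, ρ a * F (π a) ∂ν := by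
  have hF_cut : ∀ m, Continuous fun y => F y * ballCutoff m y := fun m =>
    hF.mul (continuous_ballCutoff m)
  have hF_cut_le : ∀ m y, ‖F y * ballCutoff m y‖ ≤ c := fun m y =>
    (norm_mul_le _ _).trans <| by
      simpa using mul_le_mul (hFc y) (norm_ballCutoff_le_one m y) (norm_nonneg _)
        ((norm_nonneg _).trans (hFc y))
  have hF_lim : ∀ y, Tendsto (fun m => F y * ballCutoff m y) atTop (𝓝 (F y)) := fun y => by
    simpa using (tendsto_ballCutoff y).const_mul (F y)
  have hlhs : Tendsto (fun m => ∫ ω, F (Φ ω) * ballCutoff m (Φ ω) ∂P) atTop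
      (𝓝 (∫ ω, F (Φ ω) ∂P)) :=
    tendsto_integral_of_dominated_convergence (fun _ => c)
      (fun m => ((hF_cut m).measurable.comp hΦ).aestronglyMeasurable) (integrable_const c)
      (fun m => ae_of_all _ fun ω => hF_cut_le m _) (ae_of_all _ fun ω => hF_lim _)
  have hrhs : Tendsto (fun m => ∫ a, ρ a * (F (π a) * ballCutoff m (π a)) ∂ν) atTop
      (𝓝 (∫ a, ρ a * F (π a) ∂ν)) := by
    refine tendsto_integral_of_dominated_convergence (fun a => ‖ρ a‖ * c)
      (fun m => hρ.aestronglyMeasurable.mul ((hF_cut m).measurable.comp hπ).aestronglyMeasurable)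
      (hρ.norm.mul_const c) (fun m => ae_of_all _ fun a => ?_)
      (ae_of_all _ fun a => (hF_lim _).const_mul _)
    rw [norm_mul]
    exact mul_le_mul_of_nonneg_left (hF_cut_le m _) (norm_nonneg _)
  exact tendsto_nhds_unique (hlhs.congr fun m =>
    h _ (hF_cut m) (hasCompactSupport_ballCutoff m).mul_left) hrhs

end CompactSupportExtension

section RightContinuousDensity

variable {Ω E : Type*} [MeasurableSpace Ω] [MeasurableSpace E]
  {P : Measure Ω} {μ : Measure E} {ν : Measure ℝ} {Y : ℝ → Ω → E} {S : Ω → ℝ}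
  {g : ℝ → E → ℝ → ℝ} {τ : ℕ → ℝ → ℝ} {I : Set ℝ}

theorem tendsto_setIntegral_comp_of_tendsto_nhdsWithin_Ici [TopologicalSpace E]
    [OpensMeasurableSpace E] [IsFiniteMeasure P] (hY : Measurable fun q : ℝ × Ω => Y q.1 q.2)
    (hY_rc : ∀ᵐ ω ∂P, ∀ s : ℝ, 0 < s → ContinuousWithinAt (fun u => Y u ω) (Ici s) s)
    (hS : Measurable S) (hI : MeasurableSet I) (hI_pos : I ⊆ Ioi 0)
    (hτ : ∀ n, Measurable (τ n)) (hτ_lim : ∀ σ ∈ I, Tendsto (fun n => τ n σ) atTop (𝓝[≥] σ))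
    {f : E → ℝ} (hf : Continuous f) {c : ℝ} (hfc : ∀ y, ‖f y‖ ≤ c) :
    Tendsto (fun n => ∫ ω in S ⁻¹' I, f (Y (τ n (S ω)) ω) ∂P) atTop
      (𝓝 (∫ ω in S ⁻¹' I, f (Y (S ω) ω) ∂P)) := by
  refine tendsto_integral_of_dominated_convergence (fun _ => c)
    (fun n => (hf.measurable.comp
      (hY.comp (((hτ n).comp hS).prodMk measurable_id))).aestronglyMeasurable)
    (integrable_const c) (fun n => ae_of_all _ fun ω => hfc _) ?_
  filter_upwards [ae_restrict_of_ae hY_rc, ae_restrict_mem (hS hI)] with ω hω hωI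
  exact hf.continuousAt.tendsto.comp ((hω _ (hI_pos hωI)).tendsto.comp (hτ_lim _ hωI))

theorem tendsto_integral_density_mul_of_hasCompactSupport [TopologicalSpace E]
    [OpensMeasurableSpace E] [IsFiniteMeasureOnCompacts μ] [SFinite ν]
    (hg : Measurable fun q : ℝ × E × ℝ => g q.1 q.2.1 q.2.2) (hg_nonneg : ∀ s y σ, 0 ≤ g s y σ)
    (hg_rc : ∀ (y : E) (σ : ℝ), ∀ s : ℝ, 0 < s → ContinuousWithinAt (fun u => g u y σ) (Ici s) s)
    (hI : MeasurableSet I) (hI_pos : I ⊆ Ioi 0) (hνI : ν I ≠ ∞)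
    (hτ : ∀ n, Measurable (τ n)) (hτ_lim : ∀ σ ∈ I, Tendsto (fun n => τ n σ) atTop (𝓝[≥] σ))
    {M : ℝ} (hM : ∀ n, ∀ σ ∈ I, ∀ y, g (τ n σ) y σ ≤ M)
    {f : E → ℝ} (hf : Measurable f) (hf_supp : HasCompactSupport f) {c : ℝ}
    (hfc : ∀ y, ‖f y‖ ≤ c) :
    Tendsto (fun n => ∫ q, g (τ n q.2) q.1 q.2 * f q.1 ∂μ.prod (ν.restrict I)) atTop
      (𝓝 (∫ q, g q.2 q.1 q.2 * f q.1 ∂μ.prod (ν.restrict I))) := by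
  have hI_ae : ∀ᵐ q ∂μ.prod (ν.restrict I), q.2 ∈ I :=
    Measure.quasiMeasurePreserving_snd.ae (ae_restrict_mem hI)
  have hsupp : MeasurableSet (tsupport f ×ˢ (univ : Set ℝ)) :=
    (isClosed_tsupport f).measurableSet.prod MeasurableSet.univ
  refine tendsto_integral_of_dominated_convergence
    ((tsupport f ×ˢ univ).indicator fun _ => M * c) (fun n => ?_) ?_ (fun n => ?_) ?_
  · exact ((hg.comp (((hτ n).comp measurable_snd).prodMk measurable_id)).mul
      (hf.comp measurable_fst)).aestronglyMeasurable
  · refine (integrable_indicator_iff hsupp).2 (integrableOn_const ?_)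
    rw [Measure.prod_prod, Measure.restrict_apply_univ]
    exact ENNReal.mul_ne_top hf_supp.isCompact.measure_lt_top.ne hνI
  · filter_upwards [hI_ae] with q hq
    have hM_nonneg : 0 ≤ M := (hg_nonneg _ _ _).trans (hM n _ hq q.1)
    by_cases hq_supp : q.1 ∈ tsupport f
    · rw [indicator_of_mem (mk_mem_prod hq_supp (mem_univ _)), norm_mul,
        Real.norm_of_nonneg (hg_nonneg _ _ _)]
      exact mul_le_mul (hM n _ hq _) (hfc _) (norm_nonneg _) hM_nonneg
    · rw [image_eq_zero_of_notMem_tsupport hq_supp, mul_zero, norm_zero]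
      exact indicator_nonneg (fun _ _ => mul_nonneg hM_nonneg ((norm_nonneg _).trans (hfc q.1))) _
  · filter_upwards [hI_ae] with q hq
    exact ((hg_rc _ _ _ (hI_pos hq)).tendsto.comp (hτ_lim _ hq)).mul_const _

theorem setIntegral_comp_eq_integral_density_mul_of_map_eq [SFinite μ] [SFinite ν]
    (hY : Measurable fun q : ℝ × Ω => Y q.1 q.2) (hS : Measurable S)
    (hg : Measurable fun q : ℝ × E × ℝ => g q.1 q.2.1 q.2.2) (hg_nonneg : ∀ s y σ, 0 ≤ g s y σ)
    (hI : MeasurableSet I) {τ : ℝ → ℝ} (hτ : Measurable τ)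
    (hmap : P.map (fun ω => (Y (τ (S ω)) ω, S ω))
      = (μ.prod ν).withDensity fun q => ENNReal.ofReal (g (τ q.2) q.1 q.2))
    {f : E → ℝ} (hf : Measurable f) :
    ∫ ω in S ⁻¹' I, f (Y (τ (S ω)) ω) ∂P
      = ∫ q, g (τ q.2) q.1 q.2 * f q.1 ∂μ.prod (ν.restrict I) := by
  have hpre : (fun ω => (Y (τ (S ω)) ω, S ω)) ⁻¹' (univ ×ˢ I) = S ⁻¹' I := by ext; simp
  rw [← Measure.restrict_univ (μ := μ), Measure.prod_restrict, ← hpre]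
  exact setIntegral_comp_eq_setIntegral_mul_of_map_eq_withDensity
    ((hY.comp ((hτ.comp hS).prodMk measurable_id)).prodMk hS)
    (hg.comp ((hτ.comp measurable_snd).prodMk measurable_id)) (fun _ => hg_nonneg _ _ _) hmap
    (hf.comp measurable_fst) (MeasurableSet.univ.prod hI)

theorem integrable_density_diag [IsFiniteMeasure P] [SFinite μ] [SFinite ν]
    (hY : Measurable fun q : ℝ × Ω => Y q.1 q.2) (hS : Measurable S)
    (hg : Measurable fun q : ℝ × E × ℝ => g q.1 q.2.1 q.2.2) (hg_nonneg : ∀ s y σ, 0 ≤ g s y σ)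
    (hg_rc : ∀ (y : E) (σ : ℝ), ∀ s : ℝ, 0 < s → ContinuousWithinAt (fun u => g u y σ) (Ici s) s)
    (hI : MeasurableSet I) (hI_pos : I ⊆ Ioi 0)
    (hτ : ∀ n, Measurable (τ n)) (hτ_lim : ∀ σ ∈ I, Tendsto (fun n => τ n σ) atTop (𝓝[≥] σ))
    (hmap : ∀ n, P.map (fun ω => (Y (τ n (S ω)) ω, S ω))
      = (μ.prod ν).withDensity fun q => ENNReal.ofReal (g (τ n q.2) q.1 q.2)) :
    Integrable (fun q : E × ℝ => g q.2 q.1 q.2) (μ.prod (ν.restrict I)) := by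
  have hmass : ∀ n,
      ∫⁻ q, ENNReal.ofReal (g (τ n q.2) q.1 q.2) ∂μ.prod (ν.restrict I) ≤ P univ := fun n => by
    have hφ : Measurable fun ω => (Y (τ n (S ω)) ω, S ω) :=
      (hY.comp (((hτ n).comp hS).prodMk measurable_id)).prodMk hS
    rw [← Measure.restrict_univ (μ := μ), Measure.prod_restrict,
      ← withDensity_apply _ (MeasurableSet.univ.prod hI), ← hmap n,
      Measure.map_apply hφ (MeasurableSet.univ.prod hI)]
    exact measure_mono (subset_univ _)
  have hlim : ∀ᵐ q ∂μ.prod (ν.restrict I), Tendsto (fun n => ENNReal.ofReal (g (τ n q.2) q.1 q.2))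
      atTop (𝓝 (ENNReal.ofReal (g q.2 q.1 q.2))) := by
    filter_upwards [Measure.quasiMeasurePreserving_snd.ae (ae_restrict_mem hI)] with q hq
    exact ENNReal.tendsto_ofReal ((hg_rc _ _ _ (hI_pos hq)).tendsto.comp (hτ_lim _ hq))
  refine ⟨(hg.comp (measurable_snd.prodMk measurable_id)).aestronglyMeasurable,
    (hasFiniteIntegral_iff_ofReal (ae_of_all _ fun q => hg_nonneg _ _ _)).2 ?_⟩
  calc ∫⁻ q, ENNReal.ofReal (g q.2 q.1 q.2) ∂μ.prod (ν.restrict I)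
      = ∫⁻ q, liminf (fun n => ENNReal.ofReal (g (τ n q.2) q.1 q.2)) atTop
          ∂μ.prod (ν.restrict I) := lintegral_congr_ae (hlim.mono fun q hq => hq.liminf_eq.symm)
    _ ≤ liminf (fun n => ∫⁻ q, ENNReal.ofReal (g (τ n q.2) q.1 q.2) ∂μ.prod (ν.restrict I))
          atTop :=
        lintegral_liminf_le fun n =>
          (hg.comp (((hτ n).comp measurable_snd).prodMk measurable_id)).ennreal_ofReal
    _ ≤ P univ := liminf_le_of_frequently_le' (Frequently.of_forall hmass)
    _ < ∞ := measure_lt_top P univ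

end RightContinuousDensity

theorem setIntegral_comp_eq_integral_density_mul {Ω E : Type*} [MeasurableSpace Ω]
    [NormedAddCommGroup E] [ProperSpace E] [MeasurableSpace E] [OpensMeasurableSpace E]
    {P : Measure Ω} [IsFiniteMeasure P] {μ : Measure E} [SFinite μ] [IsFiniteMeasureOnCompacts μ]
    {ν : Measure ℝ} [SFinite ν] [IsFiniteMeasureOnCompacts ν] {Y : ℝ → Ω → E}
    (hY : Measurable fun q : ℝ × Ω => Y q.1 q.2)
    (hY_rc : ∀ᵐ ω ∂P, ∀ s : ℝ, 0 < s → ContinuousWithinAt (fun u => Y u ω) (Ici s) s)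
    {S : Ω → ℝ} (hS : Measurable S) {g : ℝ → E → ℝ → ℝ}
    (hg : Measurable fun q : ℝ × E × ℝ => g q.1 q.2.1 q.2.2) (hg_nonneg : ∀ s y σ, 0 ≤ g s y σ)
    (hg_density : ∀ s : ℝ, 0 < s → P.map (fun ω => (Y s ω, S ω))
      = (μ.prod ν).withDensity fun q => ENNReal.ofReal (g s q.1 q.2))
    {a b : ℝ} (ha : 0 < a) (hg_bdd : ∃ M, ∀ s ∈ Icc a (b + 1), ∀ y σ, g s y σ ≤ M)
    (hg_rc : ∀ (y : E) (σ : ℝ), ∀ s : ℝ, 0 < s → ContinuousWithinAt (fun u => g u y σ) (Ici s) s)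
    {F : E → ℝ} (hF : Continuous F) {c : ℝ} (hFc : ∀ y, ‖F y‖ ≤ c) :
    ∫ ω in S ⁻¹' Icc a b, F (Y (S ω) ω) ∂P = ∫ y, ∫ σ in Icc a b, g σ y σ * F y ∂ν ∂μ := by
  obtain ⟨M, hM⟩ := hg_bdd
  have hI_pos : Icc a b ⊆ Ioi 0 := fun σ hσ => ha.trans_le hσ.1
  -- Clamping at `a` keeps every approximating time positive, where the densities are available.
  set τ : ℕ → ℝ → ℝ := fun n σ => dyadicCeil n (max a σ)
  have hτ : ∀ n, Measurable (τ n) := fun n =>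
    (measurable_dyadicCeil n).comp (measurable_const.max measurable_id)
  have hτ_ge : ∀ n σ, a ≤ τ n σ := fun n σ => (le_max_left a σ).trans (le_dyadicCeil _ _)
  have hτ_lim : ∀ σ ∈ Icc a b, Tendsto (fun n => τ n σ) atTop (𝓝[≥] σ) := fun σ hσ =>
    tendsto_dyadicCeil_max hσ.1
  have hτM : ∀ n, ∀ σ ∈ Icc a b, ∀ y, g (τ n σ) y σ ≤ M := fun n σ hσ y =>
    hM _ (dyadicCeil_max_mem_Icc n hσ) y σ
  have hmap : ∀ n, P.map (fun ω => (Y (τ n (S ω)) ω, S ω))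
      = (μ.prod ν).withDensity fun q => ENNReal.ofReal (g (τ n q.2) q.1 q.2) := fun n =>
    map_eq_withDensity_of_countable_range (ρ := fun t q => ENNReal.ofReal (g t q.1 q.2)) hY hS
      (hτ n) ((countable_range_dyadicCeil n).mono (range_comp_subset_range (max a) (dyadicCeil n)))
      fun σ => hg_density _ (ha.trans_le (hτ_ge n σ))
  have hdiag := integrable_density_diag hY hS hg hg_nonneg hg_rc measurableSet_Icc hI_pos hτ
    hτ_lim hmap
  have hint : Integrable (fun q : E × ℝ => g q.2 q.1 q.2 * F q.1) (μ.prod (ν.restrict (Icc a b))) :=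
    hdiag.mul_bdd (hF.measurable.comp measurable_fst).aestronglyMeasurable
      (ae_of_all _ fun q => hFc q.1)
  rw [← integral_prod _ hint]
  refine integral_comp_eq_integral_mul_of_forall_hasCompactSupport
    (hY.comp (hS.prodMk measurable_id)) measurable_fst hdiag (fun f hf hf_supp => ?_) hF hFc
  obtain ⟨C, hC⟩ := hf.bounded_above_of_compact_support hf_supp
  exact tendsto_nhds_unique
    ((tendsto_setIntegral_comp_of_tendsto_nhdsWithin_Ici hY hY_rc hS measurableSet_Icc hI_pos hτ
      hτ_lim hf hC).congr fun n =>
        setIntegral_comp_eq_integral_density_mul_of_map_eq hY hS hg hg_nonneg measurableSet_Icc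
          (hτ n) (hmap n) hf.measurable)
    (tendsto_integral_density_mul_of_hasCompactSupport hg hg_nonneg hg_rc measurableSet_Icc
      hI_pos isCompact_Icc.measure_lt_top.ne hτ hτ_lim hτM hf.measurable hf_supp hC)

theorem stmt_7_general
    {d : ℕ} {Ω : Type*} [MeasurableSpace Ω] (P : Measure Ω) [IsProbabilityMeasure P]
    (Y : ℝ → Ω → (Fin d → ℝ))
    (hY_meas : Measurable fun q : ℝ × Ω => Y q.1 q.2)
    (hY_rc : ∀ᵐ ω ∂P, ∀ s : ℝ, 0 < s → ContinuousWithinAt (fun u => Y u ω) (Set.Ici s) s)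
    (S : Ω → ℝ) (hS_meas : Measurable S)
    (g : ℝ → (Fin d → ℝ) → ℝ → ℝ)
    (hg_meas : Measurable fun q : ℝ × (Fin d → ℝ) × ℝ => g q.1 q.2.1 q.2.2)
    (hg_nonneg : ∀ s y σ, 0 ≤ g s y σ)
    (hg_density : ∀ s : ℝ, 0 < s →
        Measure.map (fun ω => (Y s ω, S ω)) P
          = volume.withDensity (fun q : (Fin d → ℝ) × ℝ => ENNReal.ofReal (g s q.1 q.2)))
    (hg_bdd : ∀ c C : ℝ, 0 < c → c < C →
        ∃ M, ∀ s ∈ Set.Icc c C, ∀ (y : Fin d → ℝ) (σ : ℝ), g s y σ ≤ M)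
    (hg_rc : ∀ (y : Fin d → ℝ) (σ : ℝ), ∀ s : ℝ, 0 < s →
        ContinuousWithinAt (fun u => g u y σ) (Set.Ici s) s)
    (K : ℝ) (hK : 1 < K)
    (F : (Fin d → ℝ) → ℝ) (hF_cont : Continuous F) (hF_bdd : ∃ M, ∀ y, |F y| ≤ M) :
    ∫ ω, F (Y (S ω) ω) * Set.indicator (Set.Icc (1/K) K) (fun _ => (1:ℝ)) (S ω) ∂P
      = ∫ y : Fin d → ℝ, ∫ σ in Set.Icc (1/K) K, g σ y σ * F y := by
  obtain ⟨c, hc⟩ := hF_bdd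
  have hK_inv_pos : 0 < 1 / K := one_div_pos.2 (zero_lt_one.trans hK)
  have hK_inv_lt : 1 / K < K + 1 := by linarith [(div_lt_one (zero_lt_one.trans hK)).2 hK]
  rw [Measure.volume_eq_prod] at hg_density
  rw [← setIntegral_comp_eq_integral_density_mul hY_meas hY_rc hS_meas hg_meas hg_nonneg
    hg_density hK_inv_pos (hg_bdd _ _ hK_inv_pos hK_inv_lt) hg_rc hF_cont hc,
    ← integral_indicator (hS_meas measurableSet_Icc)]
  congr 1 with ω
  by_cases hω : S ω ∈ Icc (1 / K) K
  · rw [indicator_of_mem hω, indicator_of_mem (show ω ∈ S ⁻¹' Icc (1 / K) K from hω), mul_one]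
  · rw [indicator_of_notMem hω, indicator_of_notMem (show ω ∉ S ⁻¹' Icc (1 / K) K from hω),
      mul_zero]

/-- Lemma 4.1: if `(Y_s, Σ)` has joint densities `g_s(y,σ)` that are bounded on compact
time intervals separated from zero and right-continuous in `s`, then for every `K > 1`
and every bounded continuous `F`,
`E[F(Y_Σ) 𝟙(Σ ∈ [1/K, K])] = ∫ dy ∫_{1/K}^K g_σ(y,σ) F(y) dσ`. -/
theorem stmt_7
    {d : ℕ} {Ω : Type*} [MeasurableSpace Ω] (P : Measure Ω) [IsProbabilityMeasure P]
    (Y : ℝ → Ω → (Fin d → ℝ))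
    (hY_meas : Measurable fun q : ℝ × Ω => Y q.1 q.2)
    (hY_rc : ∀ᵐ ω ∂P, ∀ s : ℝ, 0 < s → ContinuousWithinAt (fun u => Y u ω) (Set.Ici s) s)
    (S : Ω → ℝ) (hS_meas : Measurable S) (hS_pos : ∀ ω, 0 < S ω)
    (g : ℝ → (Fin d → ℝ) → ℝ → ℝ)
    (hg_meas : Measurable fun q : ℝ × (Fin d → ℝ) × ℝ => g q.1 q.2.1 q.2.2)
    (hg_nonneg : ∀ s y σ, 0 ≤ g s y σ)
    (hg_density : ∀ s : ℝ, 0 < s →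
        Measure.map (fun ω => (Y s ω, S ω)) P
          = volume.withDensity (fun q : (Fin d → ℝ) × ℝ => ENNReal.ofReal (g s q.1 q.2)))
    (hg_bdd : ∀ c C : ℝ, 0 < c → c < C →
        ∃ M, ∀ s ∈ Set.Icc c C, ∀ (y : Fin d → ℝ) (σ : ℝ), g s y σ ≤ M)
    (hg_rc : ∀ (y : Fin d → ℝ) (σ : ℝ), ∀ s : ℝ, 0 < s →
        ContinuousWithinAt (fun u => g u y σ) (Set.Ici s) s)
    (K : ℝ) (hK : 1 < K)
    (F : (Fin d → ℝ) → ℝ) (hF_cont : Continuous F) (hF_bdd : ∃ M, ∀ y, |F y| ≤ M) :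
    ∫ ω, F (Y (S ω) ω) * Set.indicator (Set.Icc (1/K) K) (fun _ => (1:ℝ)) (S ω) ∂P
      = ∫ y : Fin d → ℝ, ∫ σ in Set.Icc (1/K) K, g σ y σ * F y :=
  stmt_7_general P Y hY_meas hY_rc S hS_meas g hg_meas hg_nonneg hg_density hg_bdd hg_rc K hK F
    hF_cont hF_bdd
end
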